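/- arXiv:1711.01612 — 6 statements merged into one kernel-verified Lean document; each statement's English description precedes it below -/
import Mathlib

section
/- Let T be a self-adjoint bounded operator on a complex Hilbert space H. Then T attains its minimum modulus (i.e., there exists a unit vector x₀ with ‖Tx₀‖ = inf{‖Tx‖ : ‖x‖=1}) if and only if either m(T) or -m(T) is an eigenvalue of T, where m(T) = inf{‖Tx‖ : ‖x‖=1}. -/
open ContinuousLinearMap Filter Topology

noncomputable def mmod {H1 H2 : Type*} [NormedAddCommGroup H1] [InnerProductSpace ℂ H1]
    [NormedAddCommGroup H2] [InnerProductSpace ℂ H2] (T : H1 →L[ℂ] H2) : ℝ :=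
  sInf ((fun x => ‖T x‖) '' {x : H1 | ‖x‖ = 1})

def MinAttains {H1 H2 : Type*} [NormedAddCommGroup H1] [InnerProductSpace ℂ H1]
    [NormedAddCommGroup H2] [InnerProductSpace ℂ H2] (T : H1 →L[ℂ] H2) : Prop :=
  ∃ x : H1, ‖x‖ = 1 ∧ ‖T x‖ = mmod T

noncomputable def mmodOn {H1 H2 : Type*} [NormedAddCommGroup H1] [InnerProductSpace ℂ H1]
    [NormedAddCommGroup H2] [InnerProductSpace ℂ H2] (T : H1 →L[ℂ] H2)
    (M : Submodule ℂ H1) : ℝ :=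
  sInf ((fun x => ‖T x‖) '' {x : H1 | x ∈ M ∧ ‖x‖ = 1})

def MinAttainsOn {H1 H2 : Type*} [NormedAddCommGroup H1] [InnerProductSpace ℂ H1]
    [NormedAddCommGroup H2] [InnerProductSpace ℂ H2] (T : H1 →L[ℂ] H2)
    (M : Submodule ℂ H1) : Prop :=
  ∃ x : H1, x ∈ M ∧ ‖x‖ = 1 ∧ ‖T x‖ = mmodOn T M

def AbsMinAttains {H1 H2 : Type*} [NormedAddCommGroup H1] [InnerProductSpace ℂ H1]
    [NormedAddCommGroup H2] [InnerProductSpace ℂ H2] (T : H1 →L[ℂ] H2) : Prop :=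
  ∀ M : Submodule ℂ H1, M ≠ ⊥ → IsClosed (M : Set H1) → MinAttainsOn T M

/-!
A unit vector `x₀` with `‖T x₀‖ = m(T)` minimizes `⟪T† T x, x⟫ = ‖T x‖²` on the unit sphere, so it
is an eigenvector of the self-adjoint operator `T† T` for the eigenvalue `m(T)²`. When `T` is
self-adjoint this says `(T - m)(T + m) x₀ = 0`: either `(T + m) x₀ = 0`, or `(T + m) x₀` is an
eigenvector of `T` for `m`. Conversely, a normalized eigenvector for `±m(T)` attains the minimum.
-/

open Module.End
open scoped InnerProduct

theorem Module.End.hasEigenvalue_or_hasEigenvalue_neg_of_apply_apply_eq_sq_smul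
    {R M : Type*} [CommRing R] [AddCommGroup M] [Module R M] (f : Module.End R M) {c : R}
    {x : M} (hx : x ≠ 0) (h : f (f x) = c ^ 2 • x) :
    HasEigenvalue f c ∨ HasEigenvalue f (-c) := by
  by_cases hu : f x + c • x = 0
  · right
    have hfx : f x = (-c) • x := by rw [neg_smul, ← add_eq_zero_iff_eq_neg.mp hu]
    exact hasEigenvalue_of_hasEigenvector ⟨mem_eigenspace_iff.mpr hfx, hx⟩
  · left
    have hfu : f (f x + c • x) = c • (f x + c • x) := by
      rw [map_add, map_smul, h, smul_add, smul_smul, sq, add_comm]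
    exact hasEigenvalue_of_hasEigenvector ⟨mem_eigenspace_iff.mpr hfu, hu⟩

section MinimumModulus

variable {H1 H2 : Type*} [NormedAddCommGroup H1] [InnerProductSpace ℂ H1]
  [NormedAddCommGroup H2] [InnerProductSpace ℂ H2]

theorem mmod_nonneg (T : H1 →L[ℂ] H2) : 0 ≤ mmod T :=
  Real.sInf_nonneg (by rintro _ ⟨x, -, rfl⟩; exact norm_nonneg _)

theorem mmod_le_norm_apply (T : H1 →L[ℂ] H2) {x : H1} (hx : ‖x‖ = 1) : mmod T ≤ ‖T x‖ :=
  csInf_le ⟨0, by rintro _ ⟨y, -, rfl⟩; exact norm_nonneg _⟩ ⟨x, hx, rfl⟩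

theorem adjoint_comp_self_apply_eq_of_norm_apply_eq_mmod [CompleteSpace H1] [CompleteSpace H2]
    (T : H1 →L[ℂ] H2) {x₀ : H1} (hx₀ : ‖x₀‖ = 1) (hTx₀ : ‖T x₀‖ = mmod T) :
    (T† ∘L T) x₀ = ((mmod T ^ 2 : ℝ) : ℂ) • x₀ := by
  have hquad (x : H1) : (T† ∘L T).reApplyInnerSelf x = ‖T x‖ ^ 2 :=
    (T.apply_norm_sq_eq_inner_adjoint_left x).symm
  have hmin : IsMinOn (T† ∘L T).reApplyInnerSelf (Metric.sphere 0 ‖x₀‖) x₀ := by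
    intro x hx
    rw [mem_sphere_zero_iff_norm, hx₀] at hx
    rw [Set.mem_ofPred_eq, hquad, hquad, hTx₀]
    exact pow_le_pow_left₀ (mmod_nonneg T) (mmod_le_norm_apply T hx) 2
  have h := T.isPositive_adjoint_comp_self.isSelfAdjoint.eq_smul_self_of_isLocalExtrOn
    (Or.inl hmin.localize)
  rwa [rayleighQuotient, hquad, hTx₀, hx₀, one_pow, div_one] at h

theorem minAttains_of_hasEigenvalue (T : H1 →L[ℂ] H1) {c : ℂ} (hc : ‖c‖ = mmod T)
    (h : HasEigenvalue (T : H1 →ₗ[ℂ] H1) c) : MinAttains T := by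
  obtain ⟨v, hv⟩ := h.exists_hasEigenvector
  have hTv : T v = c • v := mem_eigenspace_iff.mp hv.1
  have hunit : ‖(‖v‖ : ℂ)⁻¹ • v‖ = 1 := norm_smul_inv_norm hv.2
  refine ⟨_, hunit, ?_⟩
  rw [map_smul, hTv, smul_comm, norm_smul, hunit, mul_one, hc]

end MinimumModulus

theorem stmt0 {H : Type*} [NormedAddCommGroup H] [InnerProductSpace ℂ H]
    [CompleteSpace H] (T : H →L[ℂ] H) (hT : IsSelfAdjoint T) :
    MinAttains T ↔
      (Module.End.HasEigenvalue (T : H →ₗ[ℂ] H) ((mmod T : ℂ)) ∨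
       Module.End.HasEigenvalue (T : H →ₗ[ℂ] H) (-(mmod T : ℂ))) := by
  have hnorm : ‖(mmod T : ℂ)‖ = mmod T := by
    rw [Complex.norm_real, Real.norm_of_nonneg (mmod_nonneg T)]
  constructor
  · rintro ⟨x₀, hx₀, hTx₀⟩
    have hsq := adjoint_comp_self_apply_eq_of_norm_apply_eq_mmod T hx₀ hTx₀
    rw [hT.adjoint_eq] at hsq
    refine hasEigenvalue_or_hasEigenvalue_neg_of_apply_apply_eq_sq_smul (T : H →ₗ[ℂ] H)
      (ne_zero_of_norm_ne_zero (hx₀ ▸ one_ne_zero)) ?_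
    simpa using hsq
  · rintro (h | h)
    · exact minAttains_of_hasEigenvalue T hnorm h
    · exact minAttains_of_hasEigenvalue T (by rwa [norm_neg]) h
end

section
/- Let T be a positive absolutely minimum attaining operator on H with orthonormal eigenbasis {u_λ : λ ∈ Λ}, Tu_λ = α_λ u_λ. Then for every nonempty subset Γ ⊆ Λ, the infimum inf{α_λ : λ ∈ Γ} is attained, i.e., equals min{α_λ : λ ∈ Γ}. -/
open ContinuousLinearMap Filter Topology

/-!
Let `c` be the infimum of `α` on `Γ` and suppose it is not attained, so `c < α l` for `l ∈ Γ`.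
Let `x` be a unit vector at which `T` attains its minimum modulus on the closed span `M` of
`{u l | l ∈ Γ}`. Every such `u l` is a unit vector of `M` with `‖T (u l)‖ = α l`, so
`‖T x‖ ≤ c`. On the other hand the coefficients of `x` vanish off `Γ`, so by Parseval
`‖T x‖² = ∑ α l ² ‖⟪u l, x⟫‖² > c² ∑ ‖⟪u l, x⟫‖² = c²`.
-/

open scoped InnerProductSpace
open Submodule

lemma mmodOn_le_norm_apply {H1 H2 : Type*} [NormedAddCommGroup H1] [InnerProductSpace ℂ H1]
    [NormedAddCommGroup H2] [InnerProductSpace ℂ H2] (T : H1 →L[ℂ] H2) {M : Submodule ℂ H1}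
    {x : H1} (hxM : x ∈ M) (hx : ‖x‖ = 1) : mmodOn T M ≤ ‖T x‖ :=
  csInf_le ⟨0, by rintro _ ⟨y, -, rfl⟩; exact norm_nonneg _⟩ ⟨x, ⟨hxM, hx⟩, rfl⟩

section
variable {𝕜 E ι : Type*} [RCLike 𝕜] [NormedAddCommGroup E] [InnerProductSpace 𝕜 E]

lemma Orthonormal.inner_eq_zero_of_mem_closure_span_image {v : ι → E} (hv : Orthonormal 𝕜 v)
    {s : Set ι} {i : ι} (hi : i ∉ s) {x : E}
    (hx : x ∈ (span 𝕜 (v '' s)).topologicalClosure) : ⟪v i, x⟫_𝕜 = 0 := by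
  have hspan : span 𝕜 (v '' s) ≤ (𝕜 ∙ v i)ᗮ := by
    rw [span_le]
    rintro _ ⟨j, hj, rfl⟩
    exact mem_orthogonal_singleton_iff_inner_right.mpr (hv.2 fun h => hi (h ▸ hj))
  exact mem_orthogonal_singleton_iff_inner_right.mp
    (topologicalClosure_minimal _ hspan (isClosed_orthogonal _) hx)

namespace HilbertBasis

variable (b : HilbertBasis ι 𝕜 E)

theorem hasSum_norm_inner_sq (x : E) : HasSum (fun i => ‖⟪b i, x⟫_𝕜‖ ^ 2) (‖x‖ ^ 2) := by
  have h := (b.hasSum_inner_mul_inner x x).mapL (RCLike.reCLM (K := 𝕜))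
  simp only [RCLike.reCLM_apply, ← inner_conj_symm x (b _), RCLike.conj_mul] at h
  simpa [inner_self_eq_norm_sq] using h

variable {b} {T : E →L[𝕜] E} {μ : ι → 𝕜}

theorem inner_apply_of_apply_eq_smul (hT : ∀ i, T (b i) = μ i • b i) (x : E) (i : ι) :
    ⟪b i, T x⟫_𝕜 = μ i * ⟪b i, x⟫_𝕜 := by
  classical
  have h := ((b.hasSum_repr x).mapL T).mapL (innerSL 𝕜 (b i))
  simp only [innerSL_apply_apply, map_smul, hT, b.repr_apply_apply,
    orthonormal_iff_ite.mp b.orthonormal i, smul_eq_mul, mul_ite, mul_one, mul_zero] at h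
  rw [h.unique (hasSum_single i fun j hj => if_neg (Ne.symm hj)), if_pos rfl, mul_comm]

theorem hasSum_norm_sq_mul_norm_inner_sq_of_apply_eq_smul (hT : ∀ i, T (b i) = μ i • b i)
    (x : E) : HasSum (fun i => ‖μ i‖ ^ 2 * ‖⟪b i, x⟫_𝕜‖ ^ 2) (‖T x‖ ^ 2) := by
  simpa only [inner_apply_of_apply_eq_smul hT, norm_mul, mul_pow] using
    b.hasSum_norm_inner_sq (T x)

theorem mul_norm_lt_norm_apply_of_mem_closure_span (hT : ∀ i, T (b i) = μ i • b i)
    {s : Set ι} {c : ℝ} (hc : 0 ≤ c) (hμ : ∀ i ∈ s, c < ‖μ i‖) {x : E}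
    (hxs : x ∈ (span 𝕜 (b '' s)).topologicalClosure) (hx : x ≠ 0) : c * ‖x‖ < ‖T x‖ := by
  have hmem : ∀ i, ⟪b i, x⟫_𝕜 ≠ 0 → i ∈ s := fun i hi =>
    by_contra fun his => hi (b.orthonormal.inner_eq_zero_of_mem_closure_span_image his hxs)
  obtain ⟨i₀, hi₀⟩ : ∃ i, ⟪b i, x⟫_𝕜 ≠ 0 := by
    by_contra! h
    refine hx (norm_eq_zero.mp (pow_eq_zero_iff two_ne_zero |>.mp ?_))
    exact (b.hasSum_norm_inner_sq x).unique (by simp [h])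
  have hsq : (c * ‖x‖) ^ 2 < ‖T x‖ ^ 2 := by
    rw [mul_pow]
    refine hasSum_lt (i := i₀) (fun i => ?_) ?_ ((b.hasSum_norm_inner_sq x).mul_left (c ^ 2))
      (hasSum_norm_sq_mul_norm_inner_sq_of_apply_eq_smul hT x)
    · by_cases hi : ⟪b i, x⟫_𝕜 = 0
      · simp [hi]
      · gcongr
        exact (hμ i (hmem i hi)).le
    · have := hμ i₀ (hmem i₀ hi₀)
      gcongr
  exact lt_of_pow_lt_pow_left₀ 2 (norm_nonneg _) hsq

end HilbertBasis
end

theorem stmt7_general {H : Type*} [NormedAddCommGroup H] [InnerProductSpace ℂ H]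
    [CompleteSpace H] (T : H →L[ℂ] H) (hAM : AbsMinAttains T)
    {Λ : Type*} (u : HilbertBasis Λ ℂ H) (α : Λ → ℝ) (hα : ∀ l, 0 ≤ α l)
    (heig : ∀ l, T (u l) = (α l : ℂ) • u l) :
    ∀ Γ : Set Λ, Γ.Nonempty → ∃ l ∈ Γ, α l = sInf (α '' Γ) := by
  intro Γ hΓ
  have hnorm : ∀ l, ‖(α l : ℂ)‖ = α l := fun l => by simp [abs_of_nonneg (hα l)]
  have hbdd : BddBelow (α '' Γ) := ⟨0, by rintro _ ⟨l, -, rfl⟩; exact hα l⟩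
  by_contra! hmin
  set c := sInf (α '' Γ)
  have hc : 0 ≤ c := le_csInf (hΓ.image α) (by rintro _ ⟨l, -, rfl⟩; exact hα l)
  have hlt : ∀ l ∈ Γ, c < ‖(α l : ℂ)‖ := fun l hl => by
    rw [hnorm]
    exact (csInf_le hbdd ⟨l, hl, rfl⟩).lt_of_ne' (hmin l hl)
  set M := (span ℂ (u '' Γ)).topologicalClosure
  have huM : ∀ l ∈ Γ, u l ∈ M := fun l hl => le_topologicalClosure _ (subset_span ⟨l, hl, rfl⟩)
  obtain ⟨l₀, hl₀⟩ := hΓ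
  obtain ⟨x, hxM, hx, hxmin⟩ := hAM M
    ((Submodule.ne_bot_iff M).mpr ⟨_, huM l₀ hl₀, u.orthonormal.ne_zero l₀⟩)
    (isClosed_topologicalClosure _)
  have hle : ‖T x‖ ≤ c := hxmin ▸ le_csInf ⟨_, l₀, hl₀, rfl⟩ (by
    rintro _ ⟨l, hl, rfl⟩
    have hTu := mmodOn_le_norm_apply T (huM l hl) (u.orthonormal.1 l)
    rwa [heig, norm_smul, hnorm, u.orthonormal.1 l, mul_one] at hTu)
  have hgt := u.mul_norm_lt_norm_apply_of_mem_closure_span heig hc hlt hxM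
    (norm_ne_zero_iff.mp (hx ▸ one_ne_zero))
  rw [hx, mul_one] at hgt
  exact hgt.not_ge hle

theorem stmt7 {H : Type*} [NormedAddCommGroup H] [InnerProductSpace ℂ H]
    [CompleteSpace H] (T : H →L[ℂ] H) (hT : T.IsPositive) (hAM : AbsMinAttains T)
    {Λ : Type*} (u : HilbertBasis Λ ℂ H) (α : Λ → ℝ) (hα : ∀ l, 0 ≤ α l)
    (heig : ∀ l, T (u l) = (α l : ℂ) • u l) :
    ∀ Γ : Set Λ, Γ.Nonempty → ∃ l ∈ Γ, α l = sInf (α '' Γ) :=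
  stmt7_general T hAM u α hα heig
end

section
/- Let T be a positive absolutely minimum attaining operator on H. If (aₙ) and (bₙ) are increasing sequences of eigenvalues of T with corresponding orthonormal sequences of eigenvectors (fₙ) and (gₙ), with aₙ → a and bₙ → b, then a = b. -/
/-
Suppose A < B and choose N with A < b N. Eigenvectors of the symmetric operator T for distinct
eigenvalues are orthogonal, so every f m is orthogonal to every g (N + n). Since
0 ≤ a n ≤ A < τ n < b N ≤ b (N + n), a suitable unit combination h n of f n and g (N + n) has
‖T h n‖ = τ n, for any sequence τ decreasing strictly to A; the h n are orthonormal and the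
T h n orthogonal. On the closed span M of the h n one gets
‖T x‖² ≥ A² ‖x‖² + ∑ (τ n² - A²) |⟪h n, x⟫|²,
so the minimum modulus of T on M is A, and a unit vector attaining it would be orthogonal to
every h n, hence to itself. This contradicts absolute minimum attainment; by symmetry A = B.
-/

open ContinuousLinearMap Filter Topology

open Set Submodule
open scoped InnerProductSpace

section InnerProductSpace

variable {𝕜 E ι : Type*} [RCLike 𝕜] [NormedAddCommGroup E] [InnerProductSpace 𝕜 E]

theorem ContinuousLinearMap.IsPositive.nonneg_of_apply_eq_smul {T : E →L[𝕜] E}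
    (hT : T.IsPositive) {μ : ℝ} {v : E} (hv : v ≠ 0) (h : T v = (μ : 𝕜) • v) : 0 ≤ μ := by
  have := hT.re_inner_nonneg_left v
  rw [h, inner_smul_left, RCLike.conj_ofReal, RCLike.re_ofReal_mul, inner_self_eq_norm_sq] at this
  exact (mul_nonneg_iff_of_pos_right (by positivity)).1 this

theorem LinearMap.IsSymmetric.inner_eq_zero_of_apply_eq_smul {T : E →ₗ[𝕜] E}
    (hT : T.IsSymmetric) {μ ν : 𝕜} {u v : E} (hu : T u = μ • u) (hv : T v = ν • v)
    (hμν : μ ≠ ν) : ⟪u, v⟫_𝕜 = 0 :=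
  hT.orthogonalFamily_eigenspaces hμν ⟨u, Module.End.mem_eigenspace_iff.2 hu⟩
    ⟨v, Module.End.mem_eigenspace_iff.2 hv⟩

theorem norm_sq_sum_smul_of_pairwise_inner_eq_zero {w : ι → E}
    (hw : Pairwise fun i j => ⟪w i, w j⟫_𝕜 = 0) (c : ι → 𝕜) (s : Finset ι) :
    ‖∑ i ∈ s, c i • w i‖ ^ 2 = ∑ i ∈ s, ‖c i‖ ^ 2 * ‖w i‖ ^ 2 := by
  suffices ((‖∑ i ∈ s, c i • w i‖ : ℝ) : 𝕜) ^ 2 = ∑ i ∈ s, ((‖c i‖ ^ 2 * ‖w i‖ ^ 2 : ℝ) : 𝕜) by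
    exact_mod_cast this
  simp_rw [← inner_self_eq_norm_sq_to_K, sum_inner, inner_sum, inner_smul_left, inner_smul_right]
  refine Finset.sum_congr rfl fun i hi => ?_
  rw [Finset.sum_eq_single i (fun j _ hji => by rw [hw hji.symm, mul_zero, mul_zero])
    (absurd hi), inner_self_eq_norm_sq_to_K, ← mul_assoc, RCLike.conj_mul]
  push_cast
  ring

theorem Orthonormal.inner_smul_add_smul [DecidableEq ι] {f g : ι → E} (hf : Orthonormal 𝕜 f)
    (hg : Orthonormal 𝕜 g) (hfg : ∀ i j, ⟪f i, g j⟫_𝕜 = 0) (α β γ δ : 𝕜) (i j : ι) :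
    ⟪α • f i + β • g i, γ • f j + δ • g j⟫_𝕜
      = if i = j then (starRingEnd 𝕜) α * γ + (starRingEnd 𝕜) β * δ else 0 := by
  have hgf : ⟪g i, f j⟫_𝕜 = 0 := by rw [← inner_conj_symm, hfg, map_zero]
  simp only [inner_add_left, inner_add_right, inner_smul_left, inner_smul_right,
    orthonormal_iff_ite.1 hf, orthonormal_iff_ite.1 hg, hfg, hgf]
  split_ifs <;> ring

theorem Orthonormal.exists_orthonormal_norm_sq_apply_eq {T : E →ₗ[𝕜] E} {f g : ι → E}
    (hf : Orthonormal 𝕜 f) (hg : Orthonormal 𝕜 g) (hfg : ∀ i j, ⟪f i, g j⟫_𝕜 = 0)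
    {a b t : ι → ℝ} (hfa : ∀ i, T (f i) = (a i : 𝕜) • f i) (hgb : ∀ i, T (g i) = (b i : 𝕜) • g i)
    (ht : ∀ i, t i ∈ Icc (a i ^ 2) (b i ^ 2)) :
    ∃ h : ι → E, Orthonormal 𝕜 h ∧ (Pairwise fun i j => ⟪T (h i), T (h j)⟫_𝕜 = 0) ∧
      ∀ i, ‖T (h i)‖ ^ 2 = t i := by
  have hweights : ∀ i, ∃ p q : ℝ, p ^ 2 + q ^ 2 = 1 ∧ p ^ 2 * a i ^ 2 + q ^ 2 * b i ^ 2 = t i := by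
    intro i
    obtain ⟨u, v, hu, hv, huv, hsum⟩ : t i ∈ segment ℝ (a i ^ 2) (b i ^ 2) := by
      rw [segment_eq_Icc ((ht i).1.trans (ht i).2)]
      exact ht i
    refine ⟨√u, √v, ?_, ?_⟩ <;> rw [Real.sq_sqrt hu, Real.sq_sqrt hv]
    exacts [huv, hsum]
  classical
  choose p q hpq hpqt using hweights
  have hTh : ∀ i, T ((p i : 𝕜) • f i + (q i : 𝕜) • g i)
      = ((p i * a i : ℝ) : 𝕜) • f i + ((q i * b i : ℝ) : 𝕜) • g i := fun i => by
    simp only [map_add, map_smul, hfa, hgb, smul_smul, RCLike.ofReal_mul]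
  refine ⟨fun i => (p i : 𝕜) • f i + (q i : 𝕜) • g i, ?_, fun i j hij => ?_, fun i => ?_⟩
  · rw [orthonormal_iff_ite]
    intro i j
    rw [hf.inner_smul_add_smul hg hfg]
    split_ifs with hij
    · subst hij
      rw [RCLike.conj_ofReal, RCLike.conj_ofReal, ← sq, ← sq]
      exact_mod_cast hpq i
    · rfl
  · dsimp only
    rw [hTh, hTh, hf.inner_smul_add_smul hg hfg, if_neg hij]
  · rw [hTh, ← RCLike.ofReal_inj (K := 𝕜), RCLike.ofReal_pow, ← inner_self_eq_norm_sq_to_K,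
      hf.inner_smul_add_smul hg hfg, if_pos rfl, ← hpqt]
    simp only [RCLike.conj_ofReal]
    push_cast
    ring

variable {T : E →L[𝕜] E} {h : ι → E}

theorem Orthonormal.sum_le_norm_sq_apply_of_mem_span (hh : Orthonormal 𝕜 h)
    (hTh : Pairwise fun i j => ⟪T (h i), T (h j)⟫_𝕜 = 0) {m : ℝ} (hm : ∀ i, m ≤ ‖T (h i)‖ ^ 2)
    (s : Finset ι) {x : E} (hx : x ∈ span 𝕜 (range h)) :
    m * ‖x‖ ^ 2 + ∑ i ∈ s, (‖T (h i)‖ ^ 2 - m) * ‖⟪h i, x⟫_𝕜‖ ^ 2 ≤ ‖T x‖ ^ 2 := by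
  classical
  obtain ⟨c, rfl⟩ := Finsupp.mem_span_range_iff_exists_finsupp.1 hx
  set F := c.support ∪ s
  have hxF : (c.sum fun i a => a • h i) = ∑ i ∈ F, c i • h i :=
    Finsupp.sum_of_support_subset c Finset.subset_union_left _ fun i _ => zero_smul 𝕜 (h i)
  have hcoef : ∀ i ∈ s, ⟪h i, ∑ j ∈ F, c j • h j⟫_𝕜 = c i := fun i hi =>
    hh.inner_right_sum c (Finset.mem_union_right _ hi)
  have hnorm : ‖∑ i ∈ F, c i • h i‖ ^ 2 = ∑ i ∈ F, ‖c i‖ ^ 2 := by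
    simp [norm_sq_sum_smul_of_pairwise_inner_eq_zero hh.2, hh.1]
  have hnormT : ‖T (∑ i ∈ F, c i • h i)‖ ^ 2 = ∑ i ∈ F, ‖c i‖ ^ 2 * ‖T (h i)‖ ^ 2 := by
    simp only [map_sum, map_smul, norm_sq_sum_smul_of_pairwise_inner_eq_zero hTh]
  have hs : ∑ i ∈ s, (‖T (h i)‖ ^ 2 - m) * ‖c i‖ ^ 2 ≤ ∑ i ∈ F, (‖T (h i)‖ ^ 2 - m) * ‖c i‖ ^ 2 :=
    Finset.sum_le_sum_of_subset_of_nonneg Finset.subset_union_right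
      fun i _ _ => mul_nonneg (sub_nonneg.2 (hm i)) (sq_nonneg _)
  have hsum : ∑ i ∈ s, (‖T (h i)‖ ^ 2 - m) * ‖⟪h i, ∑ j ∈ F, c j • h j⟫_𝕜‖ ^ 2
      = ∑ i ∈ s, (‖T (h i)‖ ^ 2 - m) * ‖c i‖ ^ 2 :=
    Finset.sum_congr rfl fun i hi => by rw [hcoef i hi]
  have hsplit : ∑ i ∈ F, ‖c i‖ ^ 2 * ‖T (h i)‖ ^ 2
      = m * ∑ i ∈ F, ‖c i‖ ^ 2 + ∑ i ∈ F, (‖T (h i)‖ ^ 2 - m) * ‖c i‖ ^ 2 := by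
    rw [Finset.mul_sum, ← Finset.sum_add_distrib]
    exact Finset.sum_congr rfl fun i _ => by ring
  rw [hxF, hnorm, hnormT, hsum, hsplit]
  linarith

theorem Orthonormal.sum_le_norm_sq_apply_of_mem_topologicalClosure (hh : Orthonormal 𝕜 h)
    (hTh : Pairwise fun i j => ⟪T (h i), T (h j)⟫_𝕜 = 0) {m : ℝ} (hm : ∀ i, m ≤ ‖T (h i)‖ ^ 2)
    (s : Finset ι) {x : E} (hx : x ∈ (span 𝕜 (range h)).topologicalClosure) :
    m * ‖x‖ ^ 2 + ∑ i ∈ s, (‖T (h i)‖ ^ 2 - m) * ‖⟪h i, x⟫_𝕜‖ ^ 2 ≤ ‖T x‖ ^ 2 := by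
  have hclosed : IsClosed
      {y : E | m * ‖y‖ ^ 2 + ∑ i ∈ s, (‖T (h i)‖ ^ 2 - m) * ‖⟪h i, y⟫_𝕜‖ ^ 2 ≤ ‖T y‖ ^ 2} :=
    isClosed_le (by fun_prop) (by fun_prop)
  rw [← SetLike.mem_coe, topologicalClosure_coe] at hx
  exact closure_minimal (fun y hy => hh.sum_le_norm_sq_apply_of_mem_span hTh hm s hy) hclosed hx

end InnerProductSpace

section MinimumModulus

variable {H ι : Type*} [NormedAddCommGroup H] [InnerProductSpace ℂ H]

theorem Orthonormal.not_minAttainsOn_topologicalClosure_span {T : H →L[ℂ] H} {h : ι → H}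
    (hh : Orthonormal ℂ h) (hTh : Pairwise fun i j => ⟪T (h i), T (h j)⟫_ℂ = 0) {r : ℝ}
    (hglb : IsGLB (range fun i => ‖T (h i)‖) r) (hlt : ∀ i, r < ‖T (h i)‖) :
    ¬ MinAttainsOn T (span ℂ (range h)).topologicalClosure := by
  rintro ⟨x, hxM, hx1, hxmin⟩
  have hmem : ∀ i, h i ∈ (span ℂ (range h)).topologicalClosure := fun i =>
    le_topologicalClosure _ (subset_span (mem_range_self i))
  have hr : 0 ≤ r := hglb.2 (by rintro _ ⟨i, rfl⟩; exact norm_nonneg _)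
  have hTx : ‖T x‖ ≤ r := by
    refine hxmin ▸ hglb.2 ?_
    rintro _ ⟨i, rfl⟩
    exact csInf_le ⟨0, by rintro _ ⟨y, -, rfl⟩; exact norm_nonneg _⟩ ⟨h i, ⟨hmem i, hh.1 i⟩, rfl⟩
  have horth : ∀ i, ⟪h i, x⟫_ℂ = 0 := by
    intro i
    have hgap : 0 < ‖T (h i)‖ ^ 2 - r ^ 2 := by nlinarith [hlt i]
    have := hh.sum_le_norm_sq_apply_of_mem_topologicalClosure hTh
      (fun j => pow_le_pow_left₀ hr (hlt j).le 2) {i} hxM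
    rw [Finset.sum_singleton, hx1, one_pow, mul_one] at this
    have : ‖⟪h i, x⟫_ℂ‖ ^ 2 ≤ 0 := by nlinarith [pow_le_pow_left₀ (norm_nonneg _) hTx 2]
    simpa using this
  have : x ∈ (ℂ ∙ x)ᗮ :=
    topologicalClosure_minimal _ (span_le.2 (range_subset_iff.2 fun i =>
      mem_orthogonal_singleton_iff_inner_left.2 (horth i))) (isClosed_orthogonal _) hxM
  rw [mem_orthogonal_singleton_iff_inner_left, inner_self_eq_zero] at this
  simp [this] at hx1

end MinimumModulus

theorem AbsMinAttains.le_of_tendsto_eigenvalues {H : Type*} [NormedAddCommGroup H]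
    [InnerProductSpace ℂ H] {T : H →L[ℂ] H} (hAM : AbsMinAttains T) (hT : T.IsPositive)
    {a b : ℕ → ℝ} (ha : Monotone a) (hb : Monotone b) {f g : ℕ → H} (hf : Orthonormal ℂ f)
    (hg : Orthonormal ℂ g) (hfe : ∀ n, T (f n) = (a n : ℂ) • f n)
    (hge : ∀ n, T (g n) = (b n : ℂ) • g n) {A B : ℝ} (hA : Tendsto a atTop (𝓝 A))
    (hB : Tendsto b atTop (𝓝 B)) : B ≤ A := by
  by_contra! hAB
  have ha_nonneg : ∀ n, 0 ≤ a n := fun n => hT.nonneg_of_apply_eq_smul (hf.ne_zero n) (hfe n)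
  have ha_le : ∀ n, a n ≤ A := ha.ge_of_tendsto hA
  obtain ⟨N, hN⟩ : ∃ N, A < b N := (hB.eventually (lt_mem_nhds hAB)).exists
  obtain ⟨τ, hτ_anti, hτ_mem, hτ_lim⟩ := exists_seq_strictAnti_tendsto' hN
  have hτ_nonneg : ∀ n, 0 ≤ τ n := fun n => ((ha_nonneg 0).trans (ha_le 0)).trans (hτ_mem n).1.le
  have hab : ∀ m n, a m < b (N + n) := fun m n =>
    (ha_le m).trans_lt (hN.trans_le (hb (Nat.le_add_right N n)))
  have hfg : ∀ m n, ⟪f m, g (N + n)⟫_ℂ = 0 := fun m n =>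
    hT.isSymmetric.inner_eq_zero_of_apply_eq_smul (hfe m) (hge (N + n))
      (by exact_mod_cast (hab m n).ne)
  obtain ⟨h, hh, hTh, hTh_norm⟩ := hf.exists_orthonormal_norm_sq_apply_eq
    (hg.comp _ (add_right_injective N)) hfg hfe (fun n => hge (N + n)) (t := fun n => τ n ^ 2)
    fun n => ⟨pow_le_pow_left₀ (ha_nonneg n) ((ha_le n).trans (hτ_mem n).1.le) 2,
      pow_le_pow_left₀ (hτ_nonneg n) ((hτ_mem n).2.le.trans (hb (Nat.le_add_right N n))) 2⟩
  have hTh_eq : ∀ n, ‖T (h n)‖ = τ n := fun n =>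
    (sq_eq_sq₀ (norm_nonneg _) (hτ_nonneg n)).1 (hTh_norm n)
  have hM : (span ℂ (range h)).topologicalClosure ≠ ⊥ := (Submodule.ne_bot_iff _).2
    ⟨h 0, le_topologicalClosure _ (subset_span (mem_range_self 0)), hh.ne_zero 0⟩
  refine hh.not_minAttainsOn_topologicalClosure_span hTh (r := A) ?_ (fun n => ?_) <|
    hAM _ hM (isClosed_topologicalClosure _)
  · simpa only [hTh_eq] using isGLB_of_tendsto_atTop hτ_anti.antitone hτ_lim
  · exact hTh_eq n ▸ (hτ_mem n).1

theorem stmt8_general {H : Type*} [NormedAddCommGroup H] [InnerProductSpace ℂ H]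
    (T : H →L[ℂ] H) (hT : T.IsPositive) (hAM : AbsMinAttains T)
    (a b : ℕ → ℝ) (ha : Monotone a) (hb : Monotone b)
    (f g : ℕ → H) (hf : Orthonormal ℂ f) (hg : Orthonormal ℂ g)
    (hfe : ∀ n, T (f n) = (a n : ℂ) • f n) (hge : ∀ n, T (g n) = (b n : ℂ) • g n)
    (A B : ℝ) (hA : Tendsto a atTop (nhds A)) (hB : Tendsto b atTop (nhds B)) :
    A = B :=
  le_antisymm (hAM.le_of_tendsto_eigenvalues hT hb ha hg hf hge hfe hB hA)
    (hAM.le_of_tendsto_eigenvalues hT ha hb hf hg hfe hge hA hB)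

theorem stmt8 {H : Type*} [NormedAddCommGroup H] [InnerProductSpace ℂ H]
    [CompleteSpace H] (T : H →L[ℂ] H) (hT : T.IsPositive) (hAM : AbsMinAttains T)
    (a b : ℕ → ℝ) (ha : Monotone a) (hb : Monotone b)
    (f g : ℕ → H) (hf : Orthonormal ℂ f) (hg : Orthonormal ℂ g)
    (hfe : ∀ n, T (f n) = (a n : ℂ) • f n) (hge : ∀ n, T (g n) = (b n : ℂ) • g n)
    (A B : ℝ) (hA : Tendsto a atTop (nhds A)) (hB : Tendsto b atTop (nhds B)) :
    A = B :=
  stmt8_general T hT hAM a b ha hb f g hf hg hfe hge A B hA hB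
end

section
/- Let T be a positive absolutely minimum attaining operator on H. Then the point spectrum σ_p(T) is countable. -/
/-!
A positive operator has only real, nonnegative eigenvalues, and a well-ordered subset of `ℝ` is
countable (each of its points is isolated from the right). So it suffices to rule out a strictly
decreasing sequence `g n` of eigenvalues. Its unit eigenvectors `e n` are orthonormal; let `M` be
their closed span and `c = inf g`. Every `x ∈ M` satisfies
`‖T x‖² ≥ c² ‖x‖² + (g N² - c²) ‖⟪e N, x⟫‖²` for each `N`, so the minimum modulus of `T` on `M`
is `c` and is not attained: a unit vector of `M` has some nonzero coefficient `⟪e N, x⟫`, and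
`g N > c`.
-/

open ContinuousLinearMap Filter Topology

open Set Submodule Module.End
open scoped InnerProductSpace

theorem Set.IsWF.countable {α : Type*} [TopologicalSpace α] [LinearOrder α] [OrderTopology α]
    [SecondCountableTopology α] {s : Set α} (hs : s.IsWF) : s.Countable := by
  refine Countable.mono (fun x hx => (⟨hx, ?_⟩ : x ∈ s ∧ 𝓝[s ∩ Ioi x] x = ⊥))
    countable_setOfPred_isolated_right_within
  rcases (s ∩ Ioi x).eq_empty_or_nonempty with h | h
  · rw [h, nhdsWithin_empty]
  have hwf : (s ∩ Ioi x).IsWF := hs.mono inter_subset_left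
  refine empty_mem_iff_bot.1
    (mem_nhdsWithin.2 ⟨Iio (hwf.min h), isOpen_Iio, (hwf.min_mem h).2, ?_⟩)
  exact fun y hy => hwf.not_lt_min h hy.2 hy.1

section

variable {𝕜 E ι : Type*} [RCLike 𝕜] [NormedAddCommGroup E] [InnerProductSpace 𝕜 E]

theorem Module.End.HasEigenvalue.exists_norm_eq_one {T : E →ₗ[𝕜] E} {μ : 𝕜}
    (h : HasEigenvalue T μ) : ∃ v, ‖v‖ = 1 ∧ T v = μ • v := by
  obtain ⟨v, hv⟩ := h.exists_hasEigenvector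
  refine ⟨(‖v‖⁻¹ : 𝕜) • v, norm_smul_inv_norm hv.2, ?_⟩
  rw [map_smul, hv.apply_eq_smul, smul_comm]

theorem LinearMap.IsSymmetric.orthonormal_of_eigenvectors {T : E →ₗ[𝕜] E} (hT : T.IsSymmetric)
    {e : ι → E} {μ : ι → 𝕜} (hμ : Function.Injective μ) (he : ∀ i, ‖e i‖ = 1)
    (hTe : ∀ i, T (e i) = μ i • e i) : Orthonormal 𝕜 e :=
  ⟨he, fun i j hij => hT.orthogonalFamily_eigenspaces (hμ.ne hij)
    ⟨e i, mem_eigenspace_iff.2 (hTe i)⟩ ⟨e j, mem_eigenspace_iff.2 (hTe j)⟩⟩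

theorem eq_zero_of_mem_closure_span_of_forall_inner_eq_zero {e : ι → E} {x : E}
    (hx : x ∈ (span 𝕜 (range e)).topologicalClosure) (h : ∀ i, ⟪e i, x⟫_𝕜 = 0) : x = 0 := by
  have hle : (span 𝕜 (range e)).topologicalClosure ≤ (𝕜 ∙ x)ᗮ :=
    topologicalClosure_minimal _
      (span_le.2 <| range_subset_iff.2 fun i => mem_orthogonal_singleton_iff_inner_left.2 (h i))
      (isClosed_orthogonal _)
  exact inner_self_eq_zero.1 (mem_orthogonal_singleton_iff_inner_left.1 (hle hx))

theorem Orthonormal.norm_sum_smul_sq {e : ι → E} (he : Orthonormal 𝕜 e) (s : Finset ι)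
    (l : ι → 𝕜) : ‖∑ i ∈ s, l i • e i‖ ^ 2 = ∑ i ∈ s, ‖l i‖ ^ 2 := by
  simpa only [LinearIsometry.toSpanSingleton_apply] using he.orthogonalFamily.norm_sum l s

theorem Orthonormal.norm_map_sum_smul_sq {e : ι → E} (he : Orthonormal 𝕜 e) (T : E →ₗ[𝕜] E)
    {μ : ι → 𝕜} (hTe : ∀ i, T (e i) = μ i • e i) (s : Finset ι) (l : ι → 𝕜) :
    ‖T (∑ i ∈ s, l i • e i)‖ ^ 2 = ∑ i ∈ s, ‖μ i‖ ^ 2 * ‖l i‖ ^ 2 := by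
  simp only [map_sum, map_smul, hTe, smul_smul, he.norm_sum_smul_sq, norm_mul, mul_pow, mul_comm]

theorem Orthonormal.le_norm_map_sq_of_mem_span {e : ι → E} (he : Orthonormal 𝕜 e)
    (T : E →ₗ[𝕜] E) {μ : ι → 𝕜} (hTe : ∀ i, T (e i) = μ i • e i) {c : ℝ}
    (hc : ∀ i, c ≤ ‖μ i‖ ^ 2) (N : ι) {x : E} (hx : x ∈ span 𝕜 (range e)) :
    c * ‖x‖ ^ 2 + (‖μ N‖ ^ 2 - c) * ‖⟪e N, x⟫_𝕜‖ ^ 2 ≤ ‖T x‖ ^ 2 := by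
  classical
  obtain ⟨l, rfl⟩ := Finsupp.mem_span_range_iff_exists_finsupp.1 hx
  have hN : N ∈ insert N l.support := Finset.mem_insert_self _ _
  rw [l.sum_of_support_subset (Finset.subset_insert _ _) (fun i a => a • e i)
      fun _ _ => zero_smul _ _,
    he.inner_right_sum _ hN, he.norm_sum_smul_sq, he.norm_map_sum_smul_sq T hTe]
  have hsplit : ∑ i ∈ insert N l.support, ‖μ i‖ ^ 2 * ‖l i‖ ^ 2 =
      c * ∑ i ∈ insert N l.support, ‖l i‖ ^ 2 +
        ∑ i ∈ insert N l.support, (‖μ i‖ ^ 2 - c) * ‖l i‖ ^ 2 := by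
    rw [Finset.mul_sum, ← Finset.sum_add_distrib]
    exact Finset.sum_congr rfl fun i _ => by ring
  have hsingle := Finset.single_le_sum (f := fun i => (‖μ i‖ ^ 2 - c) * ‖l i‖ ^ 2)
    (fun i _ => mul_nonneg (sub_nonneg.2 (hc i)) (sq_nonneg _)) hN
  linarith

theorem Orthonormal.le_norm_map_sq_of_mem_closure_span {e : ι → E} (he : Orthonormal 𝕜 e)
    (T : E →L[𝕜] E) {μ : ι → 𝕜} (hTe : ∀ i, T (e i) = μ i • e i) {c : ℝ}
    (hc : ∀ i, c ≤ ‖μ i‖ ^ 2) (N : ι) {x : E}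
    (hx : x ∈ (span 𝕜 (range e)).topologicalClosure) :
    c * ‖x‖ ^ 2 + (‖μ N‖ ^ 2 - c) * ‖⟪e N, x⟫_𝕜‖ ^ 2 ≤ ‖T x‖ ^ 2 := by
  have hclosed : IsClosed {y : E | c * ‖y‖ ^ 2 + (‖μ N‖ ^ 2 - c) * ‖⟪e N, y⟫_𝕜‖ ^ 2 ≤ ‖T y‖ ^ 2} :=
    isClosed_le (by fun_prop) (by fun_prop)
  refine closure_minimal (fun y hy => he.le_norm_map_sq_of_mem_span T hTe hc N hy) hclosed ?_
  rwa [← topologicalClosure_coe]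

end

section

variable {H ι : Type*} [NormedAddCommGroup H] [InnerProductSpace ℂ H]

theorem mmodOn_le {H' : Type*} [NormedAddCommGroup H'] [InnerProductSpace ℂ H'] (T : H →L[ℂ] H')
    {M : Submodule ℂ H} {x : H} (hxM : x ∈ M) (hx : ‖x‖ = 1) : mmodOn T M ≤ ‖T x‖ :=
  csInf_le ⟨0, by rintro _ ⟨y, _, rfl⟩; exact norm_nonneg _⟩ ⟨x, ⟨hxM, hx⟩, rfl⟩

theorem AbsMinAttains.exists_norm_eq_iInf_of_orthonormal {T : H →L[ℂ] H}
    (hAM : AbsMinAttains T) [Nonempty ι] {e : ι → H} (he : Orthonormal ℂ e) {μ : ι → ℂ}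
    (hTe : ∀ i, T (e i) = μ i • e i) : ∃ i, ‖μ i‖ = ⨅ j, ‖μ j‖ := by
  set c := ⨅ j, ‖μ j‖
  have hc0 : 0 ≤ c := le_ciInf fun j => norm_nonneg _
  have hcle : ∀ i, c ≤ ‖μ i‖ := ciInf_le ⟨0, by rintro _ ⟨j, rfl⟩; exact norm_nonneg _⟩
  by_contra! hne
  have hlt : ∀ i, c < ‖μ i‖ := fun i => (hcle i).lt_of_ne (hne i).symm
  set M := (span ℂ (range e)).topologicalClosure
  have heM : ∀ i, e i ∈ M := fun i => le_topologicalClosure _ (subset_span (mem_range_self i))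
  have hM : M ≠ ⊥ := by
    obtain ⟨i⟩ := ‹Nonempty ι›
    exact fun h => he.ne_zero i ((mem_bot ℂ).1 (h ▸ heM i))
  obtain ⟨x, hxM, hx1, hTx⟩ := hAM M hM (isClosed_topologicalClosure _)
  have hTxc : ‖T x‖ ≤ c := le_ciInf fun i => by
    simpa [hTx, hTe, norm_smul, he.1 i] using mmodOn_le T (heM i) (he.1 i)
  obtain ⟨N, hN⟩ : ∃ N, ⟪e N, x⟫_ℂ ≠ 0 := by
    by_contra! h
    exact norm_ne_zero_iff.1 (hx1 ▸ one_ne_zero)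
      (eq_zero_of_mem_closure_span_of_forall_inner_eq_zero hxM h)
  have key := he.le_norm_map_sq_of_mem_closure_span T hTe
    (fun i => pow_le_pow_left₀ hc0 (hcle i) 2) N hxM
  rw [hx1] at key
  have hcN : c ^ 2 < ‖μ N‖ ^ 2 := pow_lt_pow_left₀ (hlt N) hc0 two_ne_zero
  have hcoeff : 0 < ‖⟪e N, x⟫_ℂ‖ ^ 2 := by positivity
  nlinarith [pow_le_pow_left₀ (norm_nonneg _) hTxc 2]

theorem ContinuousLinearMap.IsPositive.isWF_eigenvalues_of_absMinAttains {T : H →L[ℂ] H}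
    (hT : T.IsPositive) (hAM : AbsMinAttains T) :
    {r : ℝ | HasEigenvalue (T : H →ₗ[ℂ] H) r}.IsWF := by
  refine isWF_iff_no_descending_seq.2 fun g hg hgT => ?_
  choose e he1 hTe using fun n => (hgT n).exists_norm_eq_one
  have he : Orthonormal ℂ e := hT.isSymmetric.orthonormal_of_eigenvectors
    (Complex.ofReal_injective.comp hg.injective) he1 hTe
  have hg0 : ∀ n, 0 ≤ g n := fun n =>
    eigenvalue_nonneg_of_nonneg (hgT n) hT.re_inner_nonneg_right
  obtain ⟨N, hN⟩ := hAM.exists_norm_eq_iInf_of_orthonormal he hTe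
  have hle : ‖(g N : ℂ)‖ ≤ ‖(g (N + 1) : ℂ)‖ :=
    hN ▸ ciInf_le ⟨0, by rintro _ ⟨j, rfl⟩; exact norm_nonneg _⟩ _
  simp only [Complex.norm_real, Real.norm_of_nonneg (hg0 _)] at hle
  exact hle.not_gt (hg N.lt_succ_self)

end

theorem stmt10_general {H : Type*} [NormedAddCommGroup H] [InnerProductSpace ℂ H]
    (T : H →L[ℂ] H) (hT : T.IsPositive) (hAM : AbsMinAttains T) :
    {μ : ℂ | Module.End.HasEigenvalue (T : H →ₗ[ℂ] H) μ}.Countable := by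
  refine ((hT.isWF_eigenvalues_of_absMinAttains hAM).countable.image ((↑) : ℝ → ℂ)).mono
    fun μ hμ => ?_
  have hμ_real : (μ.re : ℂ) = μ :=
    Complex.conj_eq_iff_re.1 (hT.isSymmetric.conj_eigenvalue_eq_self hμ)
  exact ⟨μ.re, hμ_real.symm ▸ hμ, hμ_real⟩

theorem stmt10 {H : Type*} [NormedAddCommGroup H] [InnerProductSpace ℂ H]
    [CompleteSpace H] (T : H →L[ℂ] H) (hT : T.IsPositive) (hAM : AbsMinAttains T) :
    {μ : ℂ | Module.End.HasEigenvalue (T : H →ₗ[ℂ] H) μ}.Countable :=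
  stmt10_general T hT hAM
end

section
/- A positive absolutely minimum attaining operator on an infinite dimensional complex Hilbert space can have at most one eigenvalue whose eigenspace is infinite dimensional. -/
open ContinuousLinearMap Filter Topology

/-!
Eigenvalues of a positive operator are real and nonnegative; let `a < b` be two of them with
infinite dimensional eigenspaces `E_a`, `E_b`, and pick orthonormal sequences `f n ∈ E_a`,
`e n ∈ E_b`. On the closed span `W` of the vectors `v n = e n + n • f n` one has
`‖T x‖² = a² ‖x‖² + (b² - a²) ‖P x‖²`, where `P` projects onto `E_b`. Since
`‖P v n‖² / ‖v n‖² = 1 / (1 + n²) → 0`, a minimizing unit vector `x ∈ W` must have `P x = 0`,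
i.e. `x ⊥ e n` for all `n`; but `⟪f n, x⟫ = n ⟪e n, x⟫` on `W`, so then `x ⊥ W` and `x = 0`.
-/

open Module End Submodule
open scoped InnerProductSpace

section OrthonormalSequence

variable {𝕜 E : Type*} [RCLike 𝕜] [NormedAddCommGroup E] [InnerProductSpace 𝕜 E]

theorem exists_orthonormal_nat_of_not_finiteDimensional (h : ¬ FiniteDimensional 𝕜 E) :
    ∃ e : ℕ → E, Orthonormal 𝕜 e := by
  let b := Basis.ofVectorSpace 𝕜 E
  have : Infinite (Basis.ofVectorSpaceIndex 𝕜 E) := by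
    rw [Set.infinite_coe_iff]
    intro hfin
    have := hfin.fintype
    exact h (Module.Finite.of_basis b)
  have hli : LinearIndependent 𝕜 (b ∘ Infinite.natEmbedding _) :=
    b.linearIndependent.comp _ (Infinite.natEmbedding _).injective
  exact ⟨_, InnerProductSpace.gramSchmidtNormed_orthonormal hli⟩

theorem Submodule.exists_orthonormal_nat_of_not_finiteDimensional (V : Submodule 𝕜 E)
    (h : ¬ FiniteDimensional 𝕜 V) : ∃ e : ℕ → E, Orthonormal 𝕜 e ∧ ∀ n, e n ∈ V := by
  obtain ⟨e, he⟩ := _root_.exists_orthonormal_nat_of_not_finiteDimensional h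
  exact ⟨fun n => e n, he.comp_linearIsometry V.subtypeₗᵢ, fun n => (e n).2⟩

end OrthonormalSequence

theorem ContinuousLinearMap.map_eq_zero_of_mem_closure_span {𝕜 E F ι : Type*} [RCLike 𝕜]
    [NormedAddCommGroup E] [NormedSpace 𝕜 E] [NormedAddCommGroup F] [NormedSpace 𝕜 F]
    (L : E →L[𝕜] F) {v : ι → E} (hv : ∀ i, L (v i) = 0) {x : E}
    (hx : x ∈ (span 𝕜 (Set.range v)).topologicalClosure) : L x = 0 :=
  topologicalClosure_minimal _ (t := LinearMap.ker (L : E →ₗ[𝕜] F))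
    (span_le.2 (Set.range_subset_iff.2 hv)) L.isClosed_ker hx

section TiltedSequence

variable (𝕜 : Type*) {E : Type*} [RCLike 𝕜] [NormedAddCommGroup E] [InnerProductSpace 𝕜 E]

def tiltedSeq (e f : ℕ → E) (n : ℕ) : E := e n + (n : 𝕜) • f n

variable {𝕜} {e f : ℕ → E}

theorem norm_tiltedSeq_sq (he : Orthonormal 𝕜 e) (hf : Orthonormal 𝕜 f)
    (hef : ∀ m n, ⟪e m, f n⟫_𝕜 = 0) (n : ℕ) : ‖tiltedSeq 𝕜 e f n‖ ^ 2 = 1 + (n : ℝ) ^ 2 := by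
  rw [tiltedSeq, @norm_add_sq 𝕜, inner_smul_right, hef]
  simp [he.1 n, hf.1 n, norm_smul]

theorem inner_eq_natCast_mul_inner_of_mem_closure_span_tiltedSeq (he : Orthonormal 𝕜 e)
    (hf : Orthonormal 𝕜 f) (hef : ∀ m n, ⟪e m, f n⟫_𝕜 = 0) {x : E}
    (hx : x ∈ (span 𝕜 (Set.range (tiltedSeq 𝕜 e f))).topologicalClosure) (n : ℕ) :
    ⟪f n, x⟫_𝕜 = n * ⟪e n, x⟫_𝕜 := by
  rw [← sub_eq_zero]
  refine (innerSL 𝕜 (f n) - (n : 𝕜) • innerSL 𝕜 (e n)).map_eq_zero_of_mem_closure_span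
    (fun m => ?_) hx
  have hfe : ⟪f n, e m⟫_𝕜 = 0 := inner_eq_zero_symm.1 (hef m n)
  simp only [sub_apply, smul_apply, innerSL_apply_apply, tiltedSeq, inner_add_right,
    inner_smul_right, hef, hfe, orthonormal_iff_ite.1 he, orthonormal_iff_ite.1 hf]
  split_ifs with h <;> simp [h]

theorem eq_zero_of_mem_closure_span_tiltedSeq (he : Orthonormal 𝕜 e) (hf : Orthonormal 𝕜 f)
    (hef : ∀ m n, ⟪e m, f n⟫_𝕜 = 0) {x : E}
    (hx : x ∈ (span 𝕜 (Set.range (tiltedSeq 𝕜 e f))).topologicalClosure)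
    (hex : ∀ n, ⟪e n, x⟫_𝕜 = 0) : x = 0 := by
  have hfx := inner_eq_natCast_mul_inner_of_mem_closure_span_tiltedSeq he hf hef hx
  refine inner_self_eq_zero.1 ((innerSL 𝕜 x).map_eq_zero_of_mem_closure_span (fun m => ?_) hx)
  rw [innerSL_apply_apply, ← inner_eq_zero_symm, tiltedSeq, inner_add_left, inner_smul_left,
    hfx, hex]
  simp

theorem starProjection_tiltedSeq (K : Submodule 𝕜 E) [K.HasOrthogonalProjection] {n : ℕ}
    (he : e n ∈ K) (hf : f n ∈ Kᗮ) : K.starProjection (tiltedSeq 𝕜 e f n) = e n := by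
  rw [tiltedSeq, map_add, map_smul, (starProjection_apply_eq_zero_iff K).2 hf,
    starProjection_eq_self_iff.2 he, smul_zero, add_zero]

end TiltedSequence

theorem mmodOn_mul_norm_le {H1 H2 : Type*} [NormedAddCommGroup H1] [InnerProductSpace ℂ H1]
    [NormedAddCommGroup H2] [InnerProductSpace ℂ H2] (T : H1 →L[ℂ] H2) {M : Submodule ℂ H1}
    {y : H1} (hy : y ∈ M) : mmodOn T M * ‖y‖ ≤ ‖T y‖ := by
  rcases eq_or_ne y 0 with rfl | hy0
  · simp
  have hle : mmodOn T M ≤ ‖T ((‖y‖ : ℂ)⁻¹ • y)‖ :=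
    csInf_le ⟨0, by rintro _ ⟨z, -, rfl⟩; exact norm_nonneg _⟩
      ⟨_, ⟨M.smul_mem _ hy, norm_smul_inv_norm hy0⟩, rfl⟩
  rw [map_smul, norm_smul, norm_inv, Complex.norm_real, norm_norm,
    le_inv_mul_iff₀ (norm_pos_iff.2 hy0)] at hle
  linarith

section Eigenspaces

variable {𝕜 E : Type*} [RCLike 𝕜] [NormedAddCommGroup E] [InnerProductSpace 𝕜 E]

theorem ContinuousLinearMap.IsPositive.exists_nonneg_eq_of_hasEigenvalue {T : E →L[𝕜] E}
    (hT : T.IsPositive) {γ : 𝕜} (hγ : HasEigenvalue (T : E →ₗ[𝕜] E) γ) :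
    ∃ a : ℝ, 0 ≤ a ∧ γ = a := by
  have hre : (RCLike.re γ : 𝕜) = γ :=
    RCLike.conj_eq_iff_re.1 (hT.isSymmetric.conj_eigenvalue_eq_self hγ)
  rw [← hre] at hγ
  exact ⟨_, eigenvalue_nonneg_of_nonneg hγ hT.re_inner_nonneg_right, hre.symm⟩

theorem norm_sq_apply_of_mem_closure_sup_eigenspace [CompleteSpace E] {T : E →L[𝕜] E}
    (hT : (T : E →ₗ[𝕜] E).IsSymmetric) {a b : ℝ} (hab : a ≠ b) {x : E}
    (hx : x ∈
      (eigenspace (T : E →ₗ[𝕜] E) a ⊔ eigenspace (T : E →ₗ[𝕜] E) b).topologicalClosure) :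
    ‖T x‖ ^ 2 = a ^ 2 * ‖x‖ ^ 2
      + (b ^ 2 - a ^ 2) * ‖(eigenspace (T : E →ₗ[𝕜] E) b).starProjection x‖ ^ 2 := by
  set Ea := eigenspace (T : E →ₗ[𝕜] E) a
  set Eb := eigenspace (T : E →ₗ[𝕜] E) b
  suffices h : ((Ea ⊔ Eb : Submodule 𝕜 E) : Set E) ⊆
      {y | ‖T y‖ ^ 2 = a ^ 2 * ‖y‖ ^ 2 + (b ^ 2 - a ^ 2) * ‖Eb.starProjection y‖ ^ 2} by
    rw [← SetLike.mem_coe, topologicalClosure_coe] at hx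
    exact closure_minimal h (isClosed_eq (by fun_prop) (by fun_prop)) hx
  have hortho : Ea ⟂ Eb := hT.orthogonalFamily_eigenspaces.isOrtho (by exact_mod_cast hab)
  intro y hy
  obtain ⟨q, hq, p, hp, rfl⟩ := mem_sup.1 hy
  have hqp : q ∈ Ebᗮ := hortho.le hq
  have hP : Eb.starProjection (q + p) = p := by
    rw [map_add, (starProjection_apply_eq_zero_iff Eb).2 hqp, starProjection_eq_self_iff.2 hp,
      zero_add]
  have hTx : T (q + p) = (a : 𝕜) • q + (b : 𝕜) • p := by
    rw [map_add, ← mem_eigenspace_iff.1 hq, ← mem_eigenspace_iff.1 hp]; rfl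
  rw [Set.mem_ofPred_eq, hP, hTx, norm_add_sq (𝕜 := 𝕜), norm_add_sq (𝕜 := 𝕜),
    inner_smul_left, inner_smul_right, inner_eq_zero_symm.1 (hqp p hp)]
  simp only [norm_smul, RCLike.norm_ofReal, mul_zero, map_zero, mul_pow, sq_abs]
  ring

end Eigenspaces

theorem AbsMinAttains.finiteDimensional_eigenspace_of_sq_lt {H : Type*} [NormedAddCommGroup H]
    [InnerProductSpace ℂ H] [CompleteSpace H] {T : H →L[ℂ] H} (hAM : AbsMinAttains T)
    (hT : (T : H →ₗ[ℂ] H).IsSymmetric) {a b : ℝ} (hab : a ^ 2 < b ^ 2)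
    (ha : ¬ FiniteDimensional ℂ (eigenspace (T : H →ₗ[ℂ] H) a)) :
    FiniteDimensional ℂ (eigenspace (T : H →ₗ[ℂ] H) b) := by
  by_contra hb
  have hab' : a ≠ b := ne_of_apply_ne (· ^ 2) hab.ne
  set Ea := eigenspace (T : H →ₗ[ℂ] H) a
  set Eb := eigenspace (T : H →ₗ[ℂ] H) b
  obtain ⟨f, hf, hfa⟩ := Ea.exists_orthonormal_nat_of_not_finiteDimensional ha
  obtain ⟨e, he, heb⟩ := Eb.exists_orthonormal_nat_of_not_finiteDimensional hb
  have hortho : Ea ⟂ Eb := hT.orthogonalFamily_eigenspaces.isOrtho (by exact_mod_cast hab')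
  have hef : ∀ m n, ⟪e m, f n⟫_ℂ = 0 := fun m n => hortho.symm.inner_eq (heb m) (hfa n)
  set W := (span ℂ (Set.range (tiltedSeq ℂ e f))).topologicalClosure
  have hvW : ∀ n, tiltedSeq ℂ e f n ∈ W := fun n =>
    le_topologicalClosure _ (subset_span ⟨n, rfl⟩)
  have hW : W ≤ (Ea ⊔ Eb).topologicalClosure :=
    topologicalClosure_mono <| span_le.2 <| Set.range_subset_iff.2 fun n =>
      add_mem (mem_sup_right (heb n)) (mem_sup_left (Ea.smul_mem _ (hfa n)))
  have hWne : W ≠ ⊥ := (Submodule.ne_bot_iff W).2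
    ⟨_, hvW 0, fun h0 => by simpa [h0] using norm_tiltedSeq_sq he hf hef 0⟩
  obtain ⟨x, hxW, hx1, hxmin⟩ := hAM W hWne (isClosed_topologicalClosure _)
  have hPv : ∀ n, Eb.starProjection (tiltedSeq ℂ e f n) = e n := fun n =>
    starProjection_tiltedSeq Eb (heb n) (hortho.le (hfa n))
  have hnorm : ∀ y ∈ W,
      ‖T y‖ ^ 2 = a ^ 2 * ‖y‖ ^ 2 + (b ^ 2 - a ^ 2) * ‖Eb.starProjection y‖ ^ 2 :=
    fun y hy => norm_sq_apply_of_mem_closure_sup_eigenspace hT hab' (hW hy)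
  have hbound : ∀ n : ℕ, ‖Eb.starProjection x‖ ^ 2 * (1 + (n : ℝ) ^ 2) ≤ 1 := fun n => by
    have h := pow_le_pow_left₀ (by positivity) (hxmin ▸ mmodOn_mul_norm_le T (hvW n)) 2
    rw [mul_pow, hnorm x hxW, hnorm _ (hvW n), hx1, hPv, he.1 n,
      norm_tiltedSeq_sq he hf hef] at h
    nlinarith
  have hPx : Eb.starProjection x = 0 := by
    by_contra hne
    have hpos : 0 < ‖Eb.starProjection x‖ ^ 2 := by positivity
    obtain ⟨n, hn⟩ := exists_nat_gt (‖Eb.starProjection x‖ ^ 2)⁻¹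
    rw [inv_lt_iff_one_lt_mul₀ hpos] at hn
    nlinarith [hbound n]
  have hx0 := eq_zero_of_mem_closure_span_tiltedSeq he hf hef hxW fun n =>
    (starProjection_apply_eq_zero_iff Eb).1 hPx (e n) (heb n)
  simp [hx0] at hx1

theorem stmt11_general {H : Type*} [NormedAddCommGroup H] [InnerProductSpace ℂ H]
    [CompleteSpace H]
    (T : H →L[ℂ] H) (hT : T.IsPositive) (hAM : AbsMinAttains T) :
    ∀ μ ν : ℂ,
      ¬ FiniteDimensional ℂ (Module.End.eigenspace (T : H →ₗ[ℂ] H) μ) →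
      ¬ FiniteDimensional ℂ (Module.End.eigenspace (T : H →ₗ[ℂ] H) ν) →
      μ = ν := by
  have hreal : ∀ γ : ℂ, ¬ FiniteDimensional ℂ (eigenspace (T : H →ₗ[ℂ] H) γ) →
      ∃ a : ℝ, 0 ≤ a ∧ γ = a := fun γ hγ =>
    hT.exists_nonneg_eq_of_hasEigenvalue <| hasEigenvalue_iff.2 fun h => hγ (h ▸ inferInstance)
  intro μ ν hμ hν
  obtain ⟨a, ha, rfl⟩ := hreal μ hμ
  obtain ⟨b, hb, rfl⟩ := hreal ν hν
  rcases lt_trichotomy a b with hab | rfl | hab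
  · exact (hν (hAM.finiteDimensional_eigenspace_of_sq_lt hT.isSymmetric
      (pow_lt_pow_left₀ hab ha two_ne_zero) hμ)).elim
  · rfl
  · exact (hμ (hAM.finiteDimensional_eigenspace_of_sq_lt hT.isSymmetric
      (pow_lt_pow_left₀ hab hb two_ne_zero) hν)).elim

theorem stmt11 {H : Type*} [NormedAddCommGroup H] [InnerProductSpace ℂ H]
    [CompleteSpace H] (hinf : ¬ FiniteDimensional ℂ H)
    (T : H →L[ℂ] H) (hT : T.IsPositive) (hAM : AbsMinAttains T) :
    ∀ μ ν : ℂ,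
      ¬ FiniteDimensional ℂ (Module.End.eigenspace (T : H →ₗ[ℂ] H) μ) →
      ¬ FiniteDimensional ℂ (Module.End.eigenspace (T : H →ₗ[ℂ] H) ν) →
      μ = ν :=
  stmt11_general T hT hAM
end

section
/- Let F be a finite rank bounded operator on a complex Hilbert space H. Then for every α ≥ 0, the operator αI - F is absolutely minimum attaining: its restriction to every nonzero closed subspace attains the minimum modulus. -/
open ContinuousLinearMap Filter Topology

/-!
A finite-dimensional `M` has a compact unit sphere. Otherwise `N = M ⊓ ker F` is nonzero and
`W = M ⊓ Nᗮ` is finite dimensional, since `F` is injective on `W` with finite-rank image. A unit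
vector of `M` splits as `u + v` with `u ∈ N`, `v ∈ W`, and
`‖(α - F)(u + v)‖² = α²‖u‖² - 2α Re⟪u, F v⟫ + ‖(α - F) v‖²`. For fixed `v`, the best `u` of norm
`√(1 - ‖v‖²)` is aligned with the projection of `F v` onto `N`; this leaves a continuous function
of `v` on the compact unit ball of `W`, whose minimum gives a minimizing unit vector of `M`.
-/

open scoped InnerProductSpace

section

variable {E X : Type*} [NormedAddCommGroup E] [InnerProductSpace ℂ E]
  [NormedAddCommGroup X] [InnerProductSpace ℂ X]

theorem minAttainsOn_of_forall_le (T : E →L[ℂ] X) {M : Submodule ℂ E} {x : E} (hxM : x ∈ M)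
    (hx : ‖x‖ = 1) (hmin : ∀ y ∈ M, ‖y‖ = 1 → ‖T x‖ ≤ ‖T y‖) : MinAttainsOn T M := by
  refine ⟨x, hxM, hx, ?_⟩
  have hleast : IsLeast ((fun y => ‖T y‖) '' {y | y ∈ M ∧ ‖y‖ = 1}) ‖T x‖ :=
    ⟨⟨x, ⟨hxM, hx⟩, rfl⟩, by rintro _ ⟨y, ⟨hyM, hy⟩, rfl⟩; exact hmin y hyM hy⟩
  rw [mmodOn, hleast.csInf_eq]

theorem minAttainsOn_of_isCompact {Y : Type*} [TopologicalSpace Y] (T : E →L[ℂ] X)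
    {M : Submodule ℂ E} {K : Set Y} (hK : IsCompact K) (hKne : K.Nonempty) {g : Y → ℝ}
    (hg : ContinuousOn g K) (hlow : ∀ y ∈ M, ‖y‖ = 1 → ∃ v ∈ K, g v ≤ ‖T y‖ ^ 2)
    (hup : ∀ v ∈ K, ∃ x ∈ M, ‖x‖ = 1 ∧ ‖T x‖ ^ 2 ≤ g v) : MinAttainsOn T M := by
  obtain ⟨v₀, hv₀K, hv₀min⟩ := hK.exists_isMinOn hKne hg
  obtain ⟨x, hxM, hx, hxv₀⟩ := hup v₀ hv₀K
  refine minAttainsOn_of_forall_le T hxM hx fun y hyM hy => ?_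
  obtain ⟨v, hvK, hvy⟩ := hlow y hyM hy
  have : ‖T x‖ ^ 2 ≤ ‖T y‖ ^ 2 := hxv₀.trans ((hv₀min hvK).trans hvy)
  exact (pow_le_pow_iff_left₀ (norm_nonneg _) (norm_nonneg _) two_ne_zero).mp this

theorem minAttainsOn_of_finiteDimensional (T : E →L[ℂ] X) {M : Submodule ℂ E} (hM : M ≠ ⊥)
    [FiniteDimensional ℂ M] : MinAttainsOn T M := by
  have : Nontrivial M := Submodule.nontrivial_iff_ne_bot.mpr hM
  refine minAttainsOn_of_isCompact T (isCompact_sphere (0 : M) 1)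
    (NormedSpace.sphere_nonempty.mpr zero_le_one) (g := fun x => ‖T x‖ ^ 2) (by fun_prop)
    (fun y hyM hy => ⟨⟨y, hyM⟩, by simpa using hy, le_rfl⟩)
    (fun x hx => ⟨x, x.2, by simpa using hx, le_rfl⟩)

theorem Submodule.finiteDimensional_of_disjoint_ker {K V W : Type*} [DivisionRing K]
    [AddCommGroup V] [Module K V] [AddCommGroup W] [Module K W] (f : V →ₗ[K] W)
    [FiniteDimensional K (LinearMap.range f)] {S : Submodule K V}
    (hS : Disjoint S (LinearMap.ker f)) : FiniteDimensional K S :=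
  Module.Finite.of_injective ((f.domRestrict S).codRestrict (LinearMap.range f)
    fun x => LinearMap.mem_range_self f x) fun _ _ hab =>
      LinearMap.injective_domRestrict_iff.mpr hS (congrArg Subtype.val hab)

theorem exists_unit_re_inner_eq_norm {N : Submodule ℂ E} (hN : N ≠ ⊥) {q : E} (hq : q ∈ N) :
    ∃ e ∈ N, ‖e‖ = 1 ∧ (⟪e, q⟫_ℂ).re = ‖q‖ := by
  by_cases hq0 : q = 0
  · obtain ⟨e, heN, he0⟩ := Submodule.exists_mem_ne_zero_of_ne_bot hN
    refine ⟨(‖e‖⁻¹ : ℂ) • e, N.smul_mem _ heN, ?_, by simp [hq0]⟩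
    simp [norm_smul, he0]
  · refine ⟨(‖q‖⁻¹ : ℂ) • q, N.smul_mem _ hq, by simp [norm_smul, hq0], ?_⟩
    rw [inner_smul_left, inner_self_eq_norm_sq_to_K]
    simp [pow_two, hq0]

section ReducedCost

variable (F : E →L[ℂ] E) (α : ℝ)

theorem norm_sq_sub_apply_add_of_mem_ker {u v : E} (hu : u ∈ LinearMap.ker (F : E →ₗ[ℂ] E))
    (huv : ⟪u, v⟫_ℂ = 0) :
    ‖((α : ℂ) • 1 - F) (u + v)‖ ^ 2
      = α ^ 2 * ‖u‖ ^ 2 - 2 * α * (⟪u, F v⟫_ℂ).re + ‖((α : ℂ) • 1 - F) v‖ ^ 2 := by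
  have hFu : F u = 0 := hu
  have hsplit : ((α : ℂ) • 1 - F) (u + v) = (α : ℂ) • u + ((α : ℂ) • 1 - F) v := by
    simp [hFu, add_sub_assoc]
  have hcross : (⟪(α : ℂ) • u, ((α : ℂ) • 1 - F) v⟫_ℂ).re = -(α * (⟪u, F v⟫_ℂ).re) := by
    simp [huv, Complex.mul_re]
  rw [hsplit, norm_add_sq (𝕜 := ℂ), RCLike.re_to_complex, hcross, norm_smul, Complex.norm_real,
    Real.norm_eq_abs, mul_pow, sq_abs]
  ring

/-- For `N ≤ ker F`, `v ⊥ N` and `α ≥ 0`, the minimum of `‖(α • 1 - F) (u + v)‖ ^ 2` over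
`u ∈ N` with `‖u‖ ^ 2 + ‖v‖ ^ 2 = 1`, attained at `u` along the projection of `F v` onto `N`. -/
noncomputable def reducedCost (N : Submodule ℂ E) [N.HasOrthogonalProjection] (v : E) : ℝ :=
  α ^ 2 * (1 - ‖v‖ ^ 2) - 2 * α * √(1 - ‖v‖ ^ 2) * ‖N.starProjection (F v)‖
    + ‖((α : ℂ) • 1 - F) v‖ ^ 2

variable {N : Submodule ℂ E} [N.HasOrthogonalProjection]

theorem continuous_reducedCost : Continuous (reducedCost F α N) := by
  unfold reducedCost; fun_prop

theorem inner_apply_eq_inner_starProjection {u : E} (hu : u ∈ N) (w : E) :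
    ⟪u, w⟫_ℂ = ⟪u, N.starProjection w⟫_ℂ := by
  rw [← Submodule.inner_starProjection_left_eq_right, N.starProjection_eq_self_iff.mpr hu]

theorem reducedCost_le_norm_sq (hα : 0 ≤ α) (hN : N ≤ LinearMap.ker (F : E →ₗ[ℂ] E)) {u v : E}
    (hu : u ∈ N) (huv : ⟪u, v⟫_ℂ = 0) (hnorm : ‖u‖ ^ 2 + ‖v‖ ^ 2 = 1) :
    reducedCost F α N v ≤ ‖((α : ℂ) • 1 - F) (u + v)‖ ^ 2 := by
  have hcs : (⟪u, F v⟫_ℂ).re ≤ ‖u‖ * ‖N.starProjection (F v)‖ := by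
    rw [inner_apply_eq_inner_starProjection hu]
    exact re_inner_le_norm (𝕜 := ℂ) _ _
  have hu_eq : ‖u‖ = √(1 - ‖v‖ ^ 2) := by
    rw [← hnorm, add_sub_cancel_right, Real.sqrt_sq (norm_nonneg u)]
  rw [norm_sq_sub_apply_add_of_mem_ker F α (hN hu) huv, reducedCost, ← hu_eq, ← hnorm,
    add_sub_cancel_right]
  nlinarith [mul_le_mul_of_nonneg_left hcs hα]

theorem exists_norm_sq_le_reducedCost (hN : N ≠ ⊥) (hNF : N ≤ LinearMap.ker (F : E →ₗ[ℂ] E))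
    {v : E} (hv : v ∈ Nᗮ) (hv1 : ‖v‖ ≤ 1) :
    ∃ u ∈ N, ‖u + v‖ = 1 ∧ ‖((α : ℂ) • 1 - F) (u + v)‖ ^ 2 ≤ reducedCost F α N v := by
  set r := √(1 - ‖v‖ ^ 2)
  have hr_sq : r ^ 2 = 1 - ‖v‖ ^ 2 := Real.sq_sqrt (by nlinarith [norm_nonneg v])
  obtain ⟨e, heN, he1, he⟩ := exists_unit_re_inner_eq_norm hN (N.starProjection_apply_mem (F v))
  have hr : (r : ℂ) • e ∈ N := N.smul_mem _ heN
  have hnorm : ‖(r : ℂ) • e‖ = r := by simp [norm_smul, he1, r]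
  have horth : ⟪(r : ℂ) • e, v⟫_ℂ = 0 := (N.mem_orthogonal v).mp hv _ hr
  refine ⟨(r : ℂ) • e, hr, ?_, le_of_eq ?_⟩
  · have := norm_add_sq_eq_norm_sq_add_norm_sq_of_inner_eq_zero _ _ horth
    rwa [hnorm, ← sq, ← sq, ← sq, hr_sq, sub_add_cancel,
      pow_eq_one_iff_of_nonneg (norm_nonneg _) two_ne_zero] at this
  · rw [norm_sq_sub_apply_add_of_mem_ker F α (hNF hr) horth, hnorm, inner_smul_left,
      inner_apply_eq_inner_starProjection heN, Complex.conj_ofReal, Complex.re_ofReal_mul, he,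
      reducedCost, hr_sq]
    ring

end ReducedCost

theorem minAttainsOn_of_le_ker (F : E →L[ℂ] E) {α : ℝ} (hα : 0 ≤ α) {M N : Submodule ℂ E}
    [N.HasOrthogonalProjection] (hNM : N ≤ M) (hNF : N ≤ LinearMap.ker (F : E →ₗ[ℂ] E))
    (hN : N ≠ ⊥) [FiniteDimensional ℂ ↥(M ⊓ Nᗮ)] :
    MinAttainsOn ((α : ℂ) • (1 : E →L[ℂ] E) - F) M := by
  refine minAttainsOn_of_isCompact _ (isCompact_closedBall (0 : ↥(M ⊓ Nᗮ)) 1)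
    ⟨0, Metric.mem_closedBall_self zero_le_one⟩ (g := fun v => reducedCost F α N v)
    ((continuous_reducedCost F α).comp continuous_subtype_val).continuousOn ?_ ?_
  · intro y hyM hy
    set v := y - N.starProjection y
    have hPy : N.starProjection y ∈ N := N.starProjection_apply_mem y
    have hv : v ∈ Nᗮ := N.sub_starProjection_mem_orthogonal y
    have horth : ⟪N.starProjection y, v⟫_ℂ = 0 := (N.mem_orthogonal v).mp hv _ hPy
    have hsum : N.starProjection y + v = y := add_sub_cancel _ _
    have hpyth : ‖N.starProjection y‖ ^ 2 + ‖v‖ ^ 2 = 1 := by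
      have := norm_add_sq_eq_norm_sq_add_norm_sq_of_inner_eq_zero _ _ horth
      rw [hsum, hy] at this
      nlinarith
    refine ⟨⟨v, sub_mem hyM (hNM hPy), hv⟩, ?_, ?_⟩
    · simpa using (by nlinarith [sq_nonneg ‖N.starProjection y‖, norm_nonneg v] : ‖v‖ ≤ 1)
    · simpa only [hsum] using reducedCost_le_norm_sq F α hα hNF hPy horth hpyth
  · rintro ⟨v, hvM, hv⟩ hv1
    obtain ⟨u, huN, hx, hux⟩ :=
      exists_norm_sq_le_reducedCost F α hN hNF hv (by simpa using hv1)
    exact ⟨u + v, add_mem (hNM huN) hvM, hx, hux⟩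

end

theorem stmt13 {H : Type*} [NormedAddCommGroup H] [InnerProductSpace ℂ H]
    [CompleteSpace H] (F : H →L[ℂ] H)
    (hFr : FiniteDimensional ℂ (LinearMap.range (F : H →ₗ[ℂ] H))) :
    ∀ α : ℝ, 0 ≤ α → AbsMinAttains ((α : ℂ) • (1 : H →L[ℂ] H) - F) := by
  intro α hα M hM hMc
  by_cases hfd : FiniteDimensional ℂ M
  · exact minAttainsOn_of_finiteDimensional _ hM
  set N := M ⊓ LinearMap.ker (F : H →ₗ[ℂ] H)
  have : CompleteSpace N := (hMc.inter F.isClosed_ker).completeSpace_coe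
  have hN : N ≠ ⊥ := fun h =>
    hfd (Submodule.finiteDimensional_of_disjoint_ker (F : H →ₗ[ℂ] H) (disjoint_iff.mpr h))
  have : FiniteDimensional ℂ ↥(M ⊓ Nᗮ) :=
    Submodule.finiteDimensional_of_disjoint_ker (F : H →ₗ[ℂ] H) <| disjoint_iff_inf_le.mpr
      fun _ ⟨⟨hxM, hxN⟩, hxF⟩ => N.inf_orthogonal_eq_bot.le ⟨⟨hxM, hxF⟩, hxN⟩
  exact minAttainsOn_of_le_ker F hα inf_le_left inf_le_right hN
end
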